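/- arXiv:1208.5604 — 2 statements merged into one kernel-verified Lean document; each statement's English description precedes it below -/
import Mathlib

section
/- Let G = (V, E) be a finite DAG and let s be a vertex with no incoming edges. Let a : V → ℝ be prescribed target values with a(s) = 1, and suppose that every vertex v ≠ s has at least one incoming edge e with a(tail(e)) ≠ 0. Then there exists a weight function W : E → ℝ such that the node path-sum α_v(W) equals a(v) for every vertex v. -/
/-- `IsPathFrom tail head u v p` means the list of edges `p` is a directed path
from vertex `u` to vertex `v`. The empty path goes from `u` to `u`. -/
def IsPathFrom {V E : Type} (tail head : E → V) : V → V → List E → Prop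
  | u, v, [] => u = v
  | u, v, e :: es => tail e = u ∧ IsPathFrom tail head (head e) v es

/-- A directed graph is acyclic if the only directed path from a vertex to itself
is the empty path. -/
def Acyclic {V E : Type} (tail head : E → V) : Prop :=
  ∀ (v : V) (p : List E), IsPathFrom tail head v v p → p = []

/-- The weight of a path is the product of the weights of its edges. -/
def pathWeight {E : Type} (W : E → ℝ) (p : List E) : ℝ := (p.map W).prod

/-- The node path-sum `α_v(W)`: the sum of the weights of all directed paths from the
source `s` to `v`.  (In an acyclic graph the only path from `s` to `s` is the empty
path, so `α_s(W) = 1`.) -/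
noncomputable def nodeAlpha {V E : Type} (tail head : E → V) (W : E → ℝ) (s v : V) : ℝ :=
  ∑ᶠ p ∈ {p : List E | IsPathFrom tail head s v p}, pathWeight W p

/-!
Choose for every vertex `v ≠ s` an incoming edge `e` with `a (tail e) ≠ 0`, give it the weight
`a v / a (tail e)` and give every other edge weight `0`. Splitting off the last edge of a path
shows that path-sums satisfy `α_v = ∑_{head e = v} α_{tail e} W(e)`, and in a finite DAG this
recursion has a unique solution with `α_s = 1`; the chosen weights make `a` a solution.
-/

open Finset

section Paths

variable {V E : Type} {tail head : E → V}

theorem isPathFrom_append_iff {u v : V} {p q : List E} :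
    IsPathFrom tail head u v (p ++ q) ↔
      ∃ w, IsPathFrom tail head u w p ∧ IsPathFrom tail head w v q := by
  induction p generalizing u with
  | nil => exact ⟨fun h => ⟨u, rfl, h⟩, fun ⟨_, rfl, h⟩ => h⟩
  | cons e es ih =>
    simp only [List.cons_append, IsPathFrom, ih]
    exact ⟨fun ⟨he, w, h₁, h₂⟩ => ⟨w, ⟨he, h₁⟩, h₂⟩, fun ⟨w, ⟨he, h₁⟩, h₂⟩ => ⟨he, w, h₁, h₂⟩⟩

theorem isPathFrom_concat_iff {u v : V} {p : List E} {e : E} :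
    IsPathFrom tail head u v (p ++ [e]) ↔ IsPathFrom tail head u (tail e) p ∧ head e = v := by
  simp [isPathFrom_append_iff, IsPathFrom]

theorem Acyclic.nodup (hacyc : Acyclic tail head) {u v : V} {p : List E}
    (hp : IsPathFrom tail head u v p) : p.Nodup := by
  induction p generalizing u with
  | nil => exact List.nodup_nil
  | cons e es ih =>
    refine List.nodup_cons.2 ⟨fun hmem => ?_, ih hp.2⟩
    obtain ⟨l₁, l₂, rfl⟩ := List.append_of_mem hmem
    obtain ⟨w, h₁, he, -⟩ := isPathFrom_append_iff.1 hp.2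
    have hcycle : IsPathFrom tail head (tail e) (tail e) (e :: l₁) := ⟨rfl, he ▸ h₁⟩
    exact List.cons_ne_nil _ _ (hacyc _ _ hcycle)

theorem Acyclic.finite_setOf_isPathFrom [Finite E] (hacyc : Acyclic tail head) (u v : V) :
    {p : List E | IsPathFrom tail head u v p}.Finite := by
  have := Fintype.ofFinite E
  exact (List.finite_length_le E (Fintype.card E)).subset fun _ hp => (hacyc.nodup hp).length_le_card

theorem exists_isPathFrom_of_transGen {u v : V}
    (h : Relation.TransGen (fun x y => ∃ e : E, tail e = x ∧ head e = y) u v) :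
    ∃ p : List E, p ≠ [] ∧ IsPathFrom tail head u v p := by
  induction h with
  | single h =>
    obtain ⟨e, he₁, he₂⟩ := h
    exact ⟨[e], List.cons_ne_nil _ _, he₁, he₂⟩
  | tail _ h ih =>
    obtain ⟨p, -, hp⟩ := ih
    obtain ⟨e, he₁, he₂⟩ := h
    exact ⟨p ++ [e], by simp, isPathFrom_concat_iff.2 ⟨he₁ ▸ hp, he₂⟩⟩

theorem Acyclic.wellFounded [Finite V] (hacyc : Acyclic tail head) :
    WellFounded (fun u v : V => ∃ e : E, tail e = u ∧ head e = v) := by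
  let r := fun u v : V => ∃ e : E, tail e = u ∧ head e = v
  have : IsTrans V (Relation.TransGen r) := ⟨fun _ _ _ => Relation.TransGen.trans⟩
  have : Std.Irrefl (Relation.TransGen r) := ⟨fun v hv => by
    obtain ⟨p, hne, hp⟩ := exists_isPathFrom_of_transGen hv
    exact hne (hacyc v p hp)⟩
  exact (Finite.wellFounded_of_trans_of_irrefl (Relation.TransGen r)).mono fun _ _ h => .single h

end Paths

section NodeAlpha

variable {V E : Type} {tail head : E → V}

theorem Acyclic.nodeAlpha_self (hacyc : Acyclic tail head) (W : E → ℝ) (s : V) :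
    nodeAlpha tail head W s s = 1 := by
  have hpaths : {p : List E | IsPathFrom tail head s s p} = {[]} :=
    Set.eq_singleton_iff_unique_mem.2 ⟨rfl, hacyc s⟩
  rw [nodeAlpha, hpaths, finsum_mem_singleton, pathWeight, List.map_nil, List.prod_nil]

theorem Acyclic.nodeAlpha_eq_sum_incoming [Fintype E] [DecidableEq V]
    (hacyc : Acyclic tail head) (W : E → ℝ) {s v : V} (hv : v ≠ s) :
    nodeAlpha tail head W s v =
      ∑ e ∈ univ.filter (head · = v), nodeAlpha tail head W s (tail e) * W e := by
  have hfin := hacyc.finite_setOf_isPathFrom s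
  simp only [nodeAlpha, finsum_mem_eq_finite_toFinset_sum _ (hfin _), sum_mul]
  rw [sum_sigma']
  symm
  refine sum_bij (fun x _ => x.2 ++ [x.1]) ?_ ?_ ?_ ?_
  · rintro ⟨e, q⟩ hx
    simp only [mem_sigma, mem_filter, Set.Finite.mem_toFinset, Set.mem_ofPred_eq] at hx ⊢
    exact isPathFrom_concat_iff.2 ⟨hx.2, hx.1.2⟩
  · rintro ⟨e, q⟩ - ⟨e', q'⟩ - h
    obtain ⟨rfl, he⟩ := List.append_inj' h rfl
    cases List.singleton_inj.1 he
    rfl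
  · intro p hp
    rw [Set.Finite.mem_toFinset, Set.mem_ofPred_eq] at hp
    obtain rfl | ⟨q, e, rfl⟩ := p.eq_nil_or_concat'
    · exact absurd hp.symm hv
    obtain ⟨hq, he⟩ := isPathFrom_concat_iff.1 hp
    exact ⟨⟨e, q⟩, by simpa [he] using hq, rfl⟩
  · rintro ⟨e, q⟩ -
    simp [pathWeight]

theorem Acyclic.nodeAlpha_eq_of_sum_incoming [Finite V] [Fintype E] [DecidableEq V]
    (hacyc : Acyclic tail head) {W : E → ℝ} {s : V} {a : V → ℝ} (has : a s = 1)
    (hrec : ∀ v, v ≠ s → ∑ e ∈ univ.filter (head · = v), a (tail e) * W e = a v) (v : V) :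
    nodeAlpha tail head W s v = a v := by
  induction v using hacyc.wellFounded.induction with
  | _ v ih =>
    obtain rfl | hv := eq_or_ne v s
    · rw [hacyc.nodeAlpha_self, has]
    rw [hacyc.nodeAlpha_eq_sum_incoming W hv, ← hrec v hv]
    refine sum_congr rfl fun e he => ?_
    rw [ih (tail e) ⟨e, rfl, (mem_filter.1 he).2⟩]

end NodeAlpha

theorem exists_sum_mul_eq_of_ne_zero {ι K : Type*} [Field K] {t : Finset ι} {c : ι → K} {i : ι}
    (hi : i ∈ t) (hc : c i ≠ 0) (b : K) : ∃ w : ι → K, ∑ j ∈ t, c j * w j = b := by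
  classical
  refine ⟨Pi.single i (b / c i), ?_⟩
  rw [sum_eq_single_of_mem i hi fun j _ hj => by simp [hj], Pi.single_eq_same, mul_div_cancel₀ b hc]

theorem exists_weights_realizing_nodeAlpha_general {V E : Type} [Fintype V] [Fintype E]
    (tail head : E → V) (hacyc : Acyclic tail head)
    (s : V)
    (a : V → ℝ) (has : a s = 1)
    (ha : ∀ v : V, v ≠ s → ∃ e : E, head e = v ∧ a (tail e) ≠ 0) :
    ∃ W : E → ℝ, ∀ v : V, nodeAlpha tail head W s v = a v := by
  classical
  have hlocal : ∀ v, ∃ w : E → ℝ,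
      v ≠ s → ∑ e ∈ univ.filter (head · = v), a (tail e) * w e = a v := by
    intro v
    obtain rfl | hv := eq_or_ne v s
    · exact ⟨0, fun h => absurd rfl h⟩
    obtain ⟨e, he, hae⟩ := ha v hv
    have hmem : e ∈ univ.filter (head · = v) := mem_filter.2 ⟨mem_univ e, he⟩
    obtain ⟨w, hw⟩ := exists_sum_mul_eq_of_ne_zero (c := fun e => a (tail e)) hmem hae (a v)
    exact ⟨w, fun _ => hw⟩
  choose w hw using hlocal
  refine ⟨fun e => w (head e) e, hacyc.nodeAlpha_eq_of_sum_incoming has fun v hv => ?_⟩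
  rw [← hw v hv]
  refine sum_congr rfl fun e he => ?_
  rw [(mem_filter.1 he).2]

/-- Existence step of the paper's Lemma 2: in a finite DAG with a source `s` having
no incoming edges, given target values `a : V → ℝ` with `a s = 1` such that every
vertex `v ≠ s` has an incoming edge whose tail has nonzero target value, there exists
a weight function `W : E → ℝ` with node path-sums `α_v(W) = a(v)` for every vertex. -/
theorem exists_weights_realizing_nodeAlpha {V E : Type} [Fintype V] [Fintype E]
    (tail head : E → V) (hacyc : Acyclic tail head)
    (s : V) (hs : ∀ e : E, head e ≠ s)
    (a : V → ℝ) (has : a s = 1)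
    (ha : ∀ v : V, v ≠ s → ∃ e : E, head e = v ∧ a (tail e) ≠ 0) :
    ∃ W : E → ℝ, ∀ v : V, nodeAlpha tail head W s v = a v :=
  exists_weights_realizing_nodeAlpha_general tail head hacyc s a has ha
end

section
/- Let G = (V, E) be a finite DAG and let s be a vertex with no incoming edges such that every vertex of G is reachable from s by a directed path. Define W : E → ℝ by W(e) = 1 if the tail of e is s, and W(e) = 1/|inc(v)| if the tail of e is a vertex v ≠ s. Then the edge path-sum satisfies α_e(W) = 1 for every edge e ∈ E. -/
/-- The edge path-sum `α_e(W)`: the sum of the weights of all directed paths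
starting at the source `s` whose last edge is `e`. -/
noncomputable def edgeAlpha {V E : Type} (tail head : E → V) (W : E → ℝ) (s : V) (e : E) : ℝ :=
  ∑ᶠ p ∈ {p : List E | IsPathFrom tail head s (head e) p ∧ p.getLast? = some e},
    pathWeight W p

/-!
Let `β(v)` be the sum of the weights of all paths from `s` to `v`. Splitting off the last edge
of a path gives `α_e = β(tail e) · W e` and, for `v ≠ s`, `β(v) = ∑_{e ∈ inc(v)} α_e`, while
acyclicity forces `β(s) = 1`. In a finite DAG the relation "some edge goes from `u` to `v`" is
well-founded; inducting along it shows that each vertex has finitely many paths from `s` (so the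
sums are genuine) and that if all edges entering `v = tail e ≠ s` have `α = 1`, then
`β(v) = |inc(v)|`, nonzero since `v` is reachable, so `α_e = |inc(v)| / |inc(v)| = 1`;
edges leaving `s` have `α_e = β(s) = 1`.
-/

namespace IsPathFrom

variable {V E : Type} {tail head : E → V}

theorem append_singleton_iff {u w : V} {e : E} :
    ∀ {p : List E}, IsPathFrom tail head u w (p ++ [e]) ↔
      IsPathFrom tail head u (tail e) p ∧ head e = w
  | [] => by simp only [IsPathFrom, List.nil_append, eq_comm (a := tail e)]
  | a :: p => by simp only [IsPathFrom, List.cons_append, append_singleton_iff, and_assoc]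

end IsPathFrom

def Adj {V E : Type} (tail head : E → V) (u v : V) : Prop := ∃ e, tail e = u ∧ head e = v

def pathsTo {V E : Type} (tail head : E → V) (u v : V) : Set (List E) :=
  {p | IsPathFrom tail head u v p}

def edgePaths {V E : Type} (tail head : E → V) (s : V) (e : E) : Set (List E) :=
  {p | IsPathFrom tail head s (head e) p ∧ p.getLast? = some e}

noncomputable def vertexAlpha {V E : Type} (tail head : E → V) (W : E → ℝ) (s v : V) : ℝ :=
  ∑ᶠ p ∈ pathsTo tail head s v, pathWeight W p

section PathSums

variable {V E : Type} {tail head : E → V}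

theorem exists_path_of_transGen_adj {u v : V} (h : Relation.TransGen (Adj tail head) u v) :
    ∃ p ≠ [], IsPathFrom tail head u v p := by
  induction h with
  | single hadj =>
    obtain ⟨e, rfl, rfl⟩ := hadj
    exact ⟨[e], List.cons_ne_nil _ _, rfl, rfl⟩
  | tail _ hadj ih =>
    obtain ⟨e, rfl, rfl⟩ := hadj
    obtain ⟨p, -, hp⟩ := ih
    exact ⟨p ++ [e], by simp, IsPathFrom.append_singleton_iff.2 ⟨hp, rfl⟩⟩

theorem wellFounded_adj [Finite V] (hacyc : Acyclic tail head) : WellFounded (Adj tail head) := by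
  have : Std.Irrefl (Relation.TransGen (Adj tail head)) := ⟨fun v h => by
    obtain ⟨p, hp, hpath⟩ := exists_path_of_transGen_adj h
    exact hp (hacyc v p hpath)⟩
  exact Subrelation.wf Relation.TransGen.single (Finite.wellFounded_of_trans_of_irrefl _)

theorem edgePaths_eq_image (s : V) (e : E) :
    edgePaths tail head s e = (· ++ [e]) '' pathsTo tail head s (tail e) := by
  ext p
  simp only [edgePaths, pathsTo, List.getLast?_eq_some_iff, Set.mem_ofPred_eq, Set.mem_image]
  constructor
  · rintro ⟨hp, q, rfl⟩
    exact ⟨q, (IsPathFrom.append_singleton_iff.1 hp).1, rfl⟩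
  · rintro ⟨q, hq, rfl⟩
    exact ⟨IsPathFrom.append_singleton_iff.2 ⟨hq, rfl⟩, q, rfl⟩

theorem pathsTo_sdiff_nil (u v : V) :
    pathsTo tail head u v \ {[]} = ⋃ e ∈ {e | head e = v}, edgePaths tail head u e := by
  ext p
  simp only [Set.mem_sdiff, Set.mem_singleton_iff, Set.mem_iUnion, Set.mem_ofPred_eq, pathsTo,
    edgePaths, exists_prop]
  constructor
  · rintro ⟨hp, hne⟩
    obtain ⟨q, e, rfl⟩ := (List.eq_nil_or_concat' p).resolve_left hne
    obtain ⟨-, rfl⟩ := IsPathFrom.append_singleton_iff.1 hp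
    exact ⟨e, rfl, hp, by simp⟩
  · rintro ⟨e, rfl, hp, hlast⟩
    exact ⟨hp, fun h => by simp [h] at hlast⟩

theorem pathsTo_finite [Finite V] [Finite E] (hacyc : Acyclic tail head) (u v : V) :
    (pathsTo tail head u v).Finite := by
  induction v using (wellFounded_adj hacyc).induction with
  | _ v ih =>
    refine (Set.Finite.insert [] ?_).subset (Set.subset_insert_sdiff_singleton [] _)
    rw [pathsTo_sdiff_nil]
    refine (Set.toFinite _).biUnion fun e he => ?_
    rw [edgePaths_eq_image]
    exact (ih _ ⟨e, rfl, he⟩).image _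

theorem edgeAlpha_eq_vertexAlpha_mul (W : E → ℝ) (s : V) (e : E) :
    edgeAlpha tail head W s e = vertexAlpha tail head W s (tail e) * W e := by
  rw [vertexAlpha, finsum_mem_mul]
  change ∑ᶠ p ∈ edgePaths tail head s e, pathWeight W p = _
  rw [edgePaths_eq_image, finsum_mem_image (List.append_left_injective [e]).injOn]
  simp [pathWeight]

theorem vertexAlpha_self (hacyc : Acyclic tail head) (W : E → ℝ) (s : V) :
    vertexAlpha tail head W s s = 1 := by
  have : pathsTo tail head s s = {[]} :=
    Set.eq_singleton_iff_unique_mem.2 ⟨rfl, fun p hp => hacyc s p hp⟩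
  simp [vertexAlpha, this, pathWeight]

theorem vertexAlpha_eq_finsum_edgeAlpha [Finite V] [Finite E] (hacyc : Acyclic tail head)
    (W : E → ℝ) {s v : V} (hv : v ≠ s) :
    vertexAlpha tail head W s v = ∑ᶠ e ∈ {e | head e = v}, edgeAlpha tail head W s e := by
  have hnil : [] ∉ pathsTo tail head s v := fun h => hv h.symm
  rw [vertexAlpha, ← Set.sdiff_singleton_eq_self hnil, pathsTo_sdiff_nil]
  refine finsum_mem_biUnion ?_ (Set.toFinite _) fun e _ => ?_
  · intro a _ b _ hab
    refine Set.disjoint_left.2 fun p ⟨_, ha⟩ ⟨_, hb⟩ => hab ?_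
    exact Option.some.inj (ha.symm.trans hb)
  · rw [edgePaths_eq_image]
    exact (pathsTo_finite hacyc s _).image _

theorem exists_head_eq_of_isPathFrom {u v : V} {p : List E} (hp : IsPathFrom tail head u v p)
    (huv : u ≠ v) : ∃ e, head e = v := by
  obtain ⟨q, e, rfl⟩ := (List.eq_nil_or_concat' p).resolve_left fun h => huv (by rwa [h] at hp)
  exact ⟨e, (IsPathFrom.append_singleton_iff.1 hp).2⟩

end PathSums

theorem edgeAlpha_eq_one_of_uniform_weights_general {V E : Type} [Fintype V] [Fintype E]
    [DecidableEq V] (tail head : E → V) (hacyc : Acyclic tail head)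
    (s : V)
    (hreach : ∀ v : V, ∃ p : List E, IsPathFrom tail head s v p)
    (W : E → ℝ)
    (hW : ∀ e : E,
      W e = if tail e = s then 1 else 1 / (Nat.card {e' : E // head e' = tail e} : ℝ)) :
    ∀ e : E, edgeAlpha tail head W s e = 1 := by
  have hinc : ∀ v ≠ s, (Nat.card {e' : E // head e' = v} : ℝ) ≠ 0 := fun v hv => by
    obtain ⟨p, hp⟩ := hreach v
    obtain ⟨e, he⟩ := exists_head_eq_of_isPathFrom hp (Ne.symm hv)
    exact Nat.cast_ne_zero.2 (Nat.card_pos_iff.2 ⟨⟨⟨e, he⟩⟩, inferInstance⟩).ne'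
  suffices ∀ v e, head e = v → edgeAlpha tail head W s e = 1 from fun e => this _ e rfl
  intro v
  induction v using (wellFounded_adj hacyc).induction with
  | _ v ih =>
    rintro e rfl
    rw [edgeAlpha_eq_vertexAlpha_mul, hW e]
    split_ifs with hs
    · rw [hs, vertexAlpha_self hacyc, one_mul]
    · have hsum := finsum_mem_congr (s := {e' | head e' = tail e}) rfl
        fun e' (he' : head e' = tail e) => ih _ ⟨e, rfl, rfl⟩ e' he'
      have hcount : ∑ᶠ e' ∈ {e' | head e' = tail e}, (1 : ℝ) = Nat.card {e' // head e' = tail e} := by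
        rw [← Nat.cast_one, ← Nat.cast_finsum_mem (Set.toFinite _), finsum_one, ← Nat.card_coe_set_eq]
        rfl
      rw [vertexAlpha_eq_finsum_edgeAlpha hacyc W hs, hsum, hcount]
      exact mul_one_div_cancel (hinc _ hs)

/-- In a finite DAG with a source `s` having no incoming edges and from which every
vertex is reachable, the weight function `W(e) = 1` if `tail e = s` and
`W(e) = 1/|inc(tail e)|` otherwise achieves edge path-sums `α_e(W) = 1` for every
edge `e`. -/
theorem edgeAlpha_eq_one_of_uniform_weights {V E : Type} [Fintype V] [Fintype E]
    [DecidableEq V] (tail head : E → V) (hacyc : Acyclic tail head)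
    (s : V) (hs : ∀ e : E, head e ≠ s)
    (hreach : ∀ v : V, ∃ p : List E, IsPathFrom tail head s v p)
    (W : E → ℝ)
    (hW : ∀ e : E,
      W e = if tail e = s then 1 else 1 / (Nat.card {e' : E // head e' = tail e} : ℝ)) :
    ∀ e : E, edgeAlpha tail head W s e = 1 :=
  edgeAlpha_eq_one_of_uniform_weights_general tail head hacyc s hreach W hW
end
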